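/- arXiv:2605.00947 — 6 statements merged into one kernel-verified Lean document; each statement's English description precedes it below -/
import Mathlib

section
/- Let f : ℕ → ℝ be a sequence satisfying a linear recurrence relation over ℝ whose characteristic polynomial has no positive real roots. Then either f is eventually zero (there exists K such that f(k) = 0 for all k ≥ K), or f assumes strictly negative values for infinitely many indices k. -/
/-!
The characteristic polynomial `P` is nonzero and has no positive roots, so over `ℝ` it factors into
linear factors `X + a` with `a ≥ 0` and quadratics `X² + bX + c` with `b² < 4c`. Each factor, hence
`P`, divides a nonzero polynomial `M` with nonnegative coefficients: for a quadratic with `b < 0`,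
multiplying by `X² - bX + c` gives `X⁴ + (2c - b²)X² + c²`, a quadratic in `X²` whose roots have
twice the argument, and doubling the argument eventually pushes it past `π/2`, where `b ≥ 0`.
Since `P(S) f = 0` for the shift `S`, also `M(S) f = 0`, i.e. `∑ mᵢ f(k + i) = 0` for all `k`.
If `f ≥ 0` from some point on, all terms vanish, and the leading one gives `f(k + deg M) = 0`.
-/

open Polynomial Filter

namespace Polynomial

section Order

variable {R : Type*} [CommSemiring R] [PartialOrder R]

def HasNonnegCoeffMultiple (P : R[X]) : Prop :=
  ∃ M : R[X], M ≠ 0 ∧ (∀ n, 0 ≤ M.coeff n) ∧ P ∣ M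

lemma hasNonnegCoeffMultiple_of_coeff_nonneg {P : R[X]} (hP0 : P ≠ 0) (hP : ∀ n, 0 ≤ P.coeff n) :
    HasNonnegCoeffMultiple P :=
  ⟨P, hP0, hP, dvd_rfl⟩

namespace HasNonnegCoeffMultiple

variable {P Q : R[X]}

lemma of_dvd (hPQ : P ∣ Q) (hQ : HasNonnegCoeffMultiple Q) : HasNonnegCoeffMultiple P :=
  let ⟨M, hM0, hM, hQM⟩ := hQ
  ⟨M, hM0, hM, hPQ.trans hQM⟩

lemma mul [IsOrderedRing R] [NoZeroDivisors R] (hP : HasNonnegCoeffMultiple P)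
    (hQ : HasNonnegCoeffMultiple Q) : HasNonnegCoeffMultiple (P * Q) := by
  obtain ⟨M, hM0, hM, hPM⟩ := hP
  obtain ⟨N, hN0, hN, hQN⟩ := hQ
  refine ⟨M * N, mul_ne_zero hM0 hN0, fun n => ?_, mul_dvd_mul hPM hQN⟩
  rw [coeff_mul]
  exact Finset.sum_nonneg fun _ _ => mul_nonneg (hM _) (hN _)

lemma expand (hP : HasNonnegCoeffMultiple P) {k : ℕ} (hk : 0 < k) :
    HasNonnegCoeffMultiple (Polynomial.expand R k P) := by
  obtain ⟨M, hM0, hM, hPM⟩ := hP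
  refine ⟨Polynomial.expand R k M, (expand_ne_zero hk).mpr hM0, fun n => ?_,
    _root_.map_dvd _ hPM⟩
  rw [coeff_expand hk]
  split_ifs
  exacts [hM _, le_rfl]

end HasNonnegCoeffMultiple

end Order

lemma hasNonnegCoeffMultiple_quadratic_of_nonneg {b c : ℝ} (hb : 0 ≤ b) (hc : 0 ≤ c) :
    HasNonnegCoeffMultiple (X ^ 2 + C b * X + C c) := by
  refine hasNonnegCoeffMultiple_of_coeff_nonneg (fun h => ?_) fun n => ?_
  · simpa using congrArg (coeff · 2) h
  · rcases n with _ | _ | _ | n <;> simp [coeff_X, coeff_C, coeff_X_pow, *]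

lemma quadratic_mul_quadratic_neg_eq_expand (b c : ℝ) :
    (X ^ 2 + C b * X + C c) * (X ^ 2 + C (-b) * X + C c) =
      expand ℝ 2 (X ^ 2 + C (2 * c - b ^ 2) * X + C (c ^ 2)) := by
  simp only [map_add, map_mul, map_pow, expand_X, expand_C, map_sub, C_neg, map_ofNat]
  ring

/- `(4c - b²) / 4c` is the `sin²` of the argument of the roots; each step that does not already
produce a nonnegative middle coefficient at least doubles it. -/
lemma hasNonnegCoeffMultiple_quadratic_of_le_two_pow (n : ℕ) :
    ∀ b c : ℝ, b ^ 2 < 4 * c → 4 * c ≤ 2 ^ n * (4 * c - b ^ 2) →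
      HasNonnegCoeffMultiple (X ^ 2 + C b * X + C c) := by
  induction n with
  | zero =>
    intro b c hdisc hn
    have hb : b = 0 := by nlinarith
    exact hasNonnegCoeffMultiple_quadratic_of_nonneg hb.ge (by nlinarith)
  | succ n ih =>
    intro b c hdisc hn
    rcases le_or_gt 0 b with hb | hb
    · exact hasNonnegCoeffMultiple_quadratic_of_nonneg hb (by nlinarith)
    have hc : 0 < c := by nlinarith
    have hsquare : HasNonnegCoeffMultiple (X ^ 2 + C (2 * c - b ^ 2) * X + C (c ^ 2)) := by
      rcases le_or_gt 0 (2 * c - b ^ 2) with hb' | hb'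
      · exact hasNonnegCoeffMultiple_quadratic_of_nonneg hb' (sq_nonneg c)
      refine ih _ _ (by nlinarith) ?_
      calc 4 * c ^ 2 ≤ c * (2 ^ (n + 1) * (4 * c - b ^ 2)) := by nlinarith
        _ ≤ b ^ 2 / 2 * (2 ^ (n + 1) * (4 * c - b ^ 2)) := by gcongr; linarith
        _ = 2 ^ n * (4 * c ^ 2 - (2 * c - b ^ 2) ^ 2) := by ring
    exact (hsquare.expand two_pos).of_dvd
      (quadratic_mul_quadratic_neg_eq_expand b c ▸ dvd_mul_right _ _)

lemma hasNonnegCoeffMultiple_quadratic {b c : ℝ}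
    (hdisc : b ^ 2 < 4 * c) : HasNonnegCoeffMultiple (X ^ 2 + C b * X + C c) := by
  obtain ⟨n, hn⟩ := pow_unbounded_of_one_lt (4 * c / (4 * c - b ^ 2)) one_lt_two
  rw [div_lt_iff₀ (by linarith)] at hn
  exact hasNonnegCoeffMultiple_quadratic_of_le_two_pow n b c hdisc hn.le

lemma exists_dvd_hasNonnegCoeffMultiple {P : ℝ[X]} (hP : 0 < P.natDegree)
    (hroots : ∀ x : ℝ, 0 < x → ¬P.IsRoot x) :
    ∃ q : ℝ[X], q ∣ P ∧ 0 < q.natDegree ∧ HasNonnegCoeffMultiple q := by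
  obtain ⟨z, hz⟩ : ∃ z : ℂ, aeval z P = 0 :=
    IsAlgClosed.exists_aeval_eq_zero ℂ P (degree_eq_natDegree (ne_zero_of_natDegree_gt hP) ▸
      (Nat.cast_ne_zero.mpr hP.ne'))
  by_cases him : z.im = 0
  · lift z to ℝ using him
    have hroot : P.IsRoot z := by
      rwa [← Complex.coe_algebraMap, aeval_algebraMap_apply, Complex.coe_algebraMap,
        Complex.ofReal_eq_zero] at hz
    have hre : z ≤ 0 := not_lt.mp fun h => hroots _ h hroot
    refine ⟨X - C z, dvd_iff_isRoot.mpr hroot, by rw [natDegree_X_sub_C]; exact one_pos,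
      hasNonnegCoeffMultiple_of_coeff_nonneg (X_sub_C_ne_zero _) fun n => ?_⟩
    rcases n with _ | _ | n <;> simp [coeff_X, coeff_C, hre]
  · have hdeg : (X ^ 2 - C (2 * z.re) * X + C (‖z‖ ^ 2)).natDegree = 2 := by compute_degree!
    refine ⟨_, quadratic_dvd_of_aeval_eq_zero_im_ne_zero P hz him, by rw [hdeg]; exact two_pos, ?_⟩
    rw [sub_eq_add_neg, ← neg_mul, ← C_neg]
    refine hasNonnegCoeffMultiple_quadratic ?_
    rw [Complex.sq_norm, Complex.normSq_apply]
    nlinarith [sq_pos_of_ne_zero him]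

theorem hasNonnegCoeffMultiple_of_forall_pos_not_isRoot {P : ℝ[X]} (hP : P ≠ 0)
    (hroots : ∀ x : ℝ, 0 < x → ¬P.IsRoot x) : HasNonnegCoeffMultiple P := by
  induction hn : P.natDegree using Nat.strong_induction_on generalizing P with
  | _ n ih =>
    rcases Nat.eq_zero_or_pos n with h0 | hpos
    · obtain ⟨a, rfl⟩ := natDegree_eq_zero.mp (hn.trans h0)
      have hunit : IsUnit (C a) := isUnit_C.mpr (Ne.isUnit (C_ne_zero.mp hP))
      exact (hasNonnegCoeffMultiple_of_coeff_nonneg one_ne_zero fun n => by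
        rcases n with _ | n <;> simp [coeff_one]).of_dvd hunit.dvd
    obtain ⟨q, ⟨P', rfl⟩, hq, hqM⟩ := exists_dvd_hasNonnegCoeffMultiple (hn ▸ hpos) hroots
    have hP' : P' ≠ 0 := right_ne_zero_of_mul hP
    have hdeg : P'.natDegree < n := by
      rw [← hn, natDegree_mul (left_ne_zero_of_mul hP) hP']
      omega
    exact hqM.mul (ih _ hdeg hP'
      (fun x hx hroot => hroots x hx (hroot.dvd (dvd_mul_left _ _))) rfl)

end Polynomial

section Shift

variable {R : Type*} [CommSemiring R]

variable (R) in
def seqShift : Module.End R (ℕ → R) :=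
  LinearMap.funLeft R R Nat.succ

lemma seqShift_pow_apply (n : ℕ) (u : ℕ → R) (k : ℕ) : (seqShift R ^ n) u k = u (k + n) := by
  induction n generalizing u with
  | zero => rfl
  | succ n ih => rw [pow_succ, Module.End.mul_apply, ih]; rfl

lemma aeval_seqShift_apply (P : R[X]) (u : ℕ → R) (k : ℕ) :
    aeval (seqShift R) P u k = ∑ i ∈ Finset.range (P.natDegree + 1), P.coeff i * u (k + i) := by
  simp [aeval_eq_sum_range, Finset.sum_apply, seqShift_pow_apply]

end Shift

lemma LinearRecurrence.IsSolution.aeval_charPoly_seqShift {R : Type*} [CommRing R]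
    {E : LinearRecurrence R} {u : ℕ → R} (hu : E.IsSolution u) :
    aeval (seqShift R) E.charPoly u = 0 := by
  funext k
  simp [LinearRecurrence.charPoly, aeval_monomial, Finset.sum_apply, seqShift_pow_apply, hu k]

lemma eventually_eq_zero_of_aeval_seqShift_eq_zero {R : Type*} [CommRing R] [LinearOrder R]
    [IsStrictOrderedRing R] {M : R[X]} (hM0 : M ≠ 0) (hM : ∀ n, 0 ≤ M.coeff n) {u : ℕ → R}
    (hu : aeval (seqShift R) M u = 0) (hpos : ∀ᶠ k in atTop, 0 ≤ u k) :
    ∀ᶠ k in atTop, u k = 0 := by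
  obtain ⟨K, hK⟩ := eventually_atTop.mp hpos
  have hshift : ∀ k ≥ K, u (k + M.natDegree) = 0 := by
    intro k hk
    have hsum := congrFun hu k
    rw [aeval_seqShift_apply, Pi.zero_apply] at hsum
    have hterm := (Finset.sum_eq_zero_iff_of_nonneg fun i _ =>
      mul_nonneg (hM i) (hK (k + i) (by omega))).mp hsum M.natDegree (by simp)
    exact (mul_eq_zero.mp hterm).resolve_left (leadingCoeff_ne_zero.mpr hM0)
  refine eventually_atTop.mpr ⟨K + M.natDegree, fun m hm => ?_⟩
  simpa [Nat.sub_add_cancel (le_of_add_le_right hm)] using hshift (m - M.natDegree) (by omega)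

/-- **Bell–Gerhold.** A real linear recurrence sequence whose characteristic polynomial
has no positive real roots is either eventually zero or assumes negative values
infinitely often. -/
theorem lrs_no_positive_real_roots (f : ℕ → ℝ) (d : ℕ) (c : Fin d → ℝ)
    (hrec : ∀ k : ℕ, f (k + d) = ∑ i : Fin d, c i * f (k + i))
    (hroots : ∀ ρ : ℝ, 0 < ρ →
      ¬ ((X ^ d - ∑ i : Fin d, C (c i) * X ^ (i : ℕ) : ℝ[X]).IsRoot ρ)) :
    (∃ K : ℕ, ∀ k ≥ K, f k = 0) ∨ (∀ K : ℕ, ∃ k ≥ K, f k < 0) := by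
  let E : LinearRecurrence ℝ := ⟨d, c⟩
  have hcharPoly : E.charPoly = X ^ d - ∑ i : Fin d, C (c i) * X ^ (i : ℕ) := by
    simp [E, LinearRecurrence.charPoly, X_pow_eq_monomial]
  obtain ⟨M, hM0, hM, Q, rfl⟩ := hasNonnegCoeffMultiple_of_forall_pos_not_isRoot
    E.charPoly_monic.ne_zero (hcharPoly ▸ hroots)
  have hsol : E.IsSolution f := hrec
  have hfM : aeval (seqShift ℝ) (E.charPoly * Q) f = 0 := by
    rw [mul_comm, map_mul, Module.End.mul_apply, hsol.aeval_charPoly_seqShift, map_zero]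
  rw [← eventually_atTop, ← frequently_atTop, or_iff_not_imp_right, not_frequently]
  intro hpos
  exact eventually_eq_zero_of_aeval_seqShift_eq_zero hM0 hM hfM (hpos.mono fun _ => le_of_not_gt)
end

section
/- Let E be a finite-dimensional real vector space, let L : E → E be a linear map having no positive real eigenvalue, and let φ : E → ℝ be a linear functional. Then for every x ∈ E there exist infinitely many natural numbers k with φ(L^k x) ≤ 0. -/
/-!
If `φ (L ^ k x) > 0` for all `k ≥ K`, then no nonzero polynomial with nonnegative coefficients
can annihilate `L`: applying it to `L ^ K x` and then `φ` gives a positive number. So it suffices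
to show that the minimal polynomial of `L`, which has no positive root, divides such a
polynomial. Over `ℂ` it splits, and every root `z` that is not a positive real is a root of a
real polynomial `X ^ (2n) - 2 Re(z ^ n) X ^ n + ‖z‖ ^ (2n)`, whose coefficients are all `≥ 0`
once `n` is chosen with `cos (n arg z) ≤ 0`.
-/

open Polynomial Real

theorem Polynomial.coeff_mul_nonneg {R : Type*} [Semiring R] [PartialOrder R] [IsOrderedRing R]
    {p q : R[X]} (hp : ∀ i, 0 ≤ p.coeff i) (hq : ∀ i, 0 ≤ q.coeff i) (i : ℕ) :
    0 ≤ (p * q).coeff i := by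
  rw [coeff_mul]
  exact Finset.sum_nonneg fun _ _ => mul_nonneg (hp _) (hq _)

theorem Complex.exists_pow_re_nonpos {z : ℂ} (hz : ∀ r : ℝ, 0 < r → z ≠ r) :
    ∃ n : ℕ, (z ^ n).re ≤ 0 := by
  rcases eq_or_ne z 0 with rfl | hz0
  · exact ⟨1, by simp⟩
  have harg : arg z ≠ 0 := fun h => by
    obtain ⟨hre, him⟩ := arg_eq_zero_iff.mp h
    exact hz z.re (hre.lt_of_ne fun h0 => hz0 (ext h0.symm him)) (ext rfl (by simpa using him))
  set θ := |arg z|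
  have hθ : 0 < θ := abs_pos.mpr harg
  -- the first multiple of `θ` beyond `π / 2` lies in `[π / 2, π / 2 + θ)`, where cosine is `≤ 0`
  set n := ⌈π / 2 / θ⌉₊
  have hlow : π / 2 ≤ n * θ := (div_le_iff₀ hθ).mp (Nat.le_ceil _)
  have hhigh : n * θ ≤ π + π / 2 := by
    have hceil := Nat.ceil_lt_add_one (by positivity : 0 ≤ π / 2 / θ)
    have hprev := (lt_div_iff₀ hθ).mp (by linarith : (n : ℝ) - 1 < π / 2 / θ)
    linarith [abs_arg_le_pi z]
  refine ⟨n, ?_⟩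
  have hcos : Real.cos (n * arg z) = Real.cos (n * θ) := by
    rw [← Real.cos_abs (n * arg z), abs_mul, Nat.abs_cast]
  calc (z ^ n).re = ‖z‖ ^ n * Real.cos (n * arg z) := by
        conv_lhs => rw [← norm_mul_exp_arg_mul_I z]
        rw [mul_pow, ← exp_nat_mul, ← mul_assoc, ← ofReal_pow, ← ofReal_natCast, ← ofReal_mul,
          re_ofReal_mul, exp_ofReal_mul_I_re]
    _ ≤ 0 := by
      rw [hcos]
      exact mul_nonpos_of_nonneg_of_nonpos (by positivity)
        (Real.cos_nonpos_of_pi_div_two_le_of_le hlow hhigh)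

theorem Complex.exists_aeval_eq_zero_coeff_nonneg {z : ℂ} (hz : ∀ r : ℝ, 0 < r → z ≠ r) :
    ∃ P : ℝ[X], P ≠ 0 ∧ (∀ i, 0 ≤ P.coeff i) ∧ aeval z P = 0 := by
  obtain ⟨n, hre⟩ := exists_pow_re_nonpos hz
  -- `z ^ n` is a root of its real quadratic `Y ^ 2 - 2 Re(z ^ n) Y + ‖z ^ n‖ ^ 2`
  refine ⟨X ^ (2 * n) + C (-2 * (z ^ n).re) * X ^ n + C (‖z‖ ^ (2 * n)), ?_, ?_, ?_⟩
  · intro h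
    have h1 := congrArg (eval 1) h
    simp only [eval_add, eval_mul, eval_pow, eval_C, eval_X, one_pow, mul_one, eval_zero] at h1
    nlinarith [pow_nonneg (norm_nonneg z) (2 * n)]
  · intro i
    simp only [coeff_add, coeff_C_mul, coeff_X_pow, coeff_C]
    split_ifs <;> nlinarith [pow_nonneg (norm_nonneg z) (2 * n)]
  · have hw : ((‖z‖ ^ (2 * n) : ℝ) : ℂ) = z ^ n * (starRingEnd ℂ) (z ^ n) := by
      rw [mul_conj', pow_mul', norm_pow]; push_cast; ring
    have hre' : (((-2) * (z ^ n).re : ℝ) : ℂ) = -(z ^ n + (starRingEnd ℂ) (z ^ n)) := by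
      rw [add_conj]; push_cast; ring
    rw [map_add, map_add, map_mul, aeval_X_pow, aeval_X_pow, aeval_C, aeval_C,
      Complex.coe_algebraMap, hw, hre']
    ring

theorem Polynomial.exists_prod_X_sub_C_dvd_map_coeff_nonneg (s : Multiset ℂ)
    (hs : ∀ z ∈ s, ∀ r : ℝ, 0 < r → z ≠ r) :
    ∃ F : ℝ[X], F ≠ 0 ∧ (∀ i, 0 ≤ F.coeff i) ∧
      (s.map (X - C ·)).prod ∣ F.map (algebraMap ℝ ℂ) := by
  induction s using Multiset.induction_on with
  | empty =>
    exact ⟨1, one_ne_zero, fun i => by by_cases hi : i = 0 <;> simp [coeff_one, hi], by simp⟩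
  | cons z s ih =>
    obtain ⟨F, hF0, hF, hdvd⟩ := ih fun w hw => hs w (Multiset.mem_cons_of_mem hw)
    obtain ⟨P, hP0, hP, hPz⟩ :=
      Complex.exists_aeval_eq_zero_coeff_nonneg (hs z (Multiset.mem_cons_self z s))
    refine ⟨P * F, mul_ne_zero hP0 hF0, coeff_mul_nonneg hP hF, ?_⟩
    rw [Multiset.map_cons, Multiset.prod_cons, Polynomial.map_mul]
    exact mul_dvd_mul (dvd_iff_isRoot.mpr (by rwa [IsRoot, eval_map_algebraMap])) hdvd

theorem Polynomial.exists_dvd_ne_zero_coeff_nonneg {p : ℝ[X]}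
    (hp : ∀ r : ℝ, 0 < r → ¬ p.IsRoot r) :
    ∃ F : ℝ[X], F ≠ 0 ∧ (∀ i, 0 ≤ F.coeff i) ∧ p ∣ F := by
  have hp0 : p ≠ 0 := fun h => hp 1 one_pos (by simp [h])
  have hroots : ∀ z ∈ (p.map (algebraMap ℝ ℂ)).roots, ∀ r : ℝ, 0 < r → z ≠ r := by
    rintro z hz r hr rfl
    have := (mem_roots_map_of_injective (algebraMap ℝ ℂ).injective hp0).mp hz
    rw [← Complex.coe_algebraMap, eval₂_at_apply, map_eq_zero] at this
    exact hp r hr this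
  obtain ⟨F, hF0, hF, hdvd⟩ := exists_prod_X_sub_C_dvd_map_coeff_nonneg _ hroots
  refine ⟨F, hF0, hF, (map_dvd_map' (algebraMap ℝ ℂ)).mp ?_⟩
  rwa [(IsAlgClosed.splits (p.map (algebraMap ℝ ℂ))).eq_prod_roots,
    C_mul_dvd (by simpa using hp0)]

theorem Module.End.exists_apply_pow_apply_nonpos_of_aeval_eq_zero {𝕜 E : Type*} [Field 𝕜]
    [LinearOrder 𝕜] [IsStrictOrderedRing 𝕜] [AddCommGroup E] [Module 𝕜 E] {L : Module.End 𝕜 E}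
    {F : 𝕜[X]} (hF0 : F ≠ 0) (hF : ∀ i, 0 ≤ F.coeff i) (hFL : aeval L F = 0)
    (φ : E →ₗ[𝕜] 𝕜) (y : E) : ∃ i, φ ((L ^ i) y) ≤ 0 := by
  by_contra! hpos
  have hsum : φ (aeval L F y) =
      ∑ i ∈ Finset.range (F.natDegree + 1), F.coeff i * φ ((L ^ i) y) := by
    simp [aeval_eq_sum_range, LinearMap.sum_apply, map_sum]
  rw [hFL, LinearMap.zero_apply, map_zero] at hsum
  refine (Finset.sum_pos' (fun i _ => mul_nonneg (hF i) (hpos i).le)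
    ⟨F.natDegree, Finset.self_mem_range_succ _, ?_⟩).ne' hsum.symm
  exact mul_pos ((hF _).lt_of_ne (leadingCoeff_ne_zero.mpr hF0).symm) (hpos _)

/-- If a linear map `L` on a finite-dimensional real vector space has no positive real
eigenvalue, then for every linear functional `φ` and every point `x` there are
infinitely many `k` with `φ (L^k x) ≤ 0`. -/
theorem no_positive_eigenvalue_infinitely_often_nonpos
    (E : Type*) [AddCommGroup E] [Module ℝ E] [FiniteDimensional ℝ E]
    (L : E →ₗ[ℝ] E)
    (hL : ∀ ρ : ℝ, 0 < ρ → ∀ v : E, L v = ρ • v → v = 0)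
    (φ : E →ₗ[ℝ] ℝ) (x : E) :
    ∀ K : ℕ, ∃ k ≥ K, φ ((L ^ k) x) ≤ 0 := by
  intro K
  by_contra! hK
  have hroot : ∀ ρ : ℝ, 0 < ρ → ¬ (minpoly ℝ L).IsRoot ρ := fun ρ hρ h => by
    obtain ⟨v, hv⟩ := (Module.End.hasEigenvalue_of_isRoot h).exists_hasEigenvector
    exact hv.2 (hL ρ hρ v hv.apply_eq_smul)
  obtain ⟨F, hF0, hF, hdvd⟩ := exists_dvd_ne_zero_coeff_nonneg hroot
  obtain ⟨i, hi⟩ := Module.End.exists_apply_pow_apply_nonpos_of_aeval_eq_zero hF0 hF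
    (aeval_eq_zero_of_dvd_aeval_eq_zero hdvd (minpoly.aeval ℝ L)) φ ((L ^ K) x)
  rw [← Module.End.mul_apply, ← pow_add] at hi
  exact (hK (i + K) le_add_self).not_ge hi
end

section
/- Let E be a finite-dimensional real vector space and L : E → E a linear map all of whose complex eigenvalues are positive real numbers. Let ρ_1 < ... < ρ_N be the (distinct) eigenvalues of L, and let E_j be the generalized eigenspace of L for ρ_j, so that E = E_1 ⊕ ... ⊕ E_N. Let x ∈ E be nonzero, write x = x_1 + ... + x_N with x_j ∈ E_j, and let M be the largest index with x_M ≠ 0. Then there exists a non-negative integer d such that the sequence (C(k,d))⁻¹ · ρ_M^{-k} · L^k x converges, as k → ∞, to a nonzero vector w satisfying L w = ρ_M w (an eigenvector of L for the eigenvalue ρ_M). Here C(k,d) denotes the binomial coefficient k choose d. -/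
/-!
On the generalized eigenspace of `ρ`, write `L = ρ + N`; the binomial theorem gives
`L^k v = ∑_{i<r} C(k,i) ρ^(k-i) N^i v`, with a number of terms independent of `k`. Relative to
`ρ_M^k`, a component for a smaller (positive) eigenvalue is `O(k^i (ρ_j/ρ_M)^k)` and dies out.
For the top component, let `d` be the last index with `N^d x_M ≠ 0`: since `C(k,i) = o(C(k,d))`
for `i < d`, the term `i = d` dominates after dividing by `C(k,d)`, and the limit
`ρ_M^{-d} N^d x_M` is killed by `N`.
-/

open Filter Finset Asymptotics Topology

theorem tendsto_choose_div_choose_of_lt {i d : ℕ} (h : i < d) :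
    Tendsto (fun k : ℕ => (k.choose i : ℝ) / k.choose d) atTop (𝓝 0) := by
  have hpow : (fun k : ℕ => (k : ℝ) ^ i) =o[atTop] fun k : ℕ => (k : ℝ) ^ d :=
    (isLittleO_pow_pow_atTop_of_lt h).comp_tendsto tendsto_natCast_atTop_atTop
  exact ((isTheta_choose i).isBigO.trans_isLittleO
    (hpow.trans_isBigO (isTheta_choose d).symm.isBigO)).tendsto_div_nhds_zero

theorem tendsto_inv_pow_mul_choose_mul_pow_sub {a b : ℝ} (ha : a ≠ 0) (hab : |a| < |b|)
    (i : ℕ) : Tendsto (fun k : ℕ => (b ^ k)⁻¹ * (k.choose i * a ^ (k - i))) atTop (𝓝 0) := by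
  have hq : |a / b| < 1 := by
    rw [abs_div]
    exact (div_lt_one ((abs_nonneg a).trans_lt hab)).2 hab
  have hlim : Tendsto (fun k : ℕ => (k.choose i : ℝ) * (a / b) ^ k) atTop (𝓝 0) :=
    ((isTheta_choose i).isBigO.mul (isBigO_refl _ _)).trans_tendsto
      (tendsto_pow_const_mul_const_pow_of_abs_lt_one i hq)
  refine (by simpa using hlim.const_mul (a ^ i)⁻¹ : Tendsto _ _ _).congr' ?_
  filter_upwards [eventually_ge_atTop i] with k hk
  rw [pow_sub₀ _ ha hk, div_pow]
  ring

namespace Module.End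

variable {R M : Type*} [CommRing R] [AddCommGroup M] [Module R M]

theorem exists_pow_apply_ne_zero_and_pow_succ_apply_eq_zero {f : End R M} {v : M} {r : ℕ}
    (hv : v ≠ 0) (hr : (f ^ r) v = 0) : ∃ d, (f ^ d) v ≠ 0 ∧ (f ^ (d + 1)) v = 0 := by
  classical
  have hex : ∃ d, (f ^ (d + 1)) v = 0 := by
    obtain _ | r := r
    · exact absurd hr (by simpa using hv)
    · exact ⟨r, hr⟩
  refine ⟨Nat.find hex, ?_, Nat.find_spec hex⟩
  cases h : Nat.find hex with
  | zero => simpa using hv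
  | succ d => exact Nat.find_min hex (h ▸ d.lt_succ_self)

theorem hasEigenvalue_of_pow_sub_smul_apply_eq_zero {f : End R M} {a : R} {r : ℕ} {v : M}
    (hv : v ≠ 0) (hr : ((f - a • 1) ^ r) v = 0) : f.HasEigenvalue a :=
  hasEigenvalue_of_hasGenEigenvalue (k := r) <|
    hasGenEigenvalue_iff.2 <| (Submodule.ne_bot_iff _).2 ⟨v, mem_genEigenspace_nat.2 hr, hv⟩

theorem HasEigenvalue.pos_of_forall_isRoot_charpoly_map_re_pos {E : Type*} [AddCommGroup E]
    [Module ℝ E] [FiniteDimensional ℝ E] {f : End ℝ E}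
    (hf : ∀ z : ℂ, (f.charpoly.map (algebraMap ℝ ℂ)).IsRoot z → 0 < z.re) {a : ℝ}
    (ha : f.HasEigenvalue a) : 0 < a := by
  simpa using hf a ((hasEigenvalue_iff_isRoot_charpoly f a).1 ha).map

theorem pow_apply_eq_sum_choose_smul_of_pow_sub_smul_apply_eq_zero {f : End R M} {a : R}
    {r : ℕ} {v : M} (hr : ((f - a • 1) ^ r) v = 0) (k : ℕ) :
    (f ^ k) v = ∑ i ∈ range r, ((k.choose i : R) * a ^ (k - i)) • ((f - a • 1) ^ i) v := by
  set g : ℕ → M := fun i => ((k.choose i : R) * a ^ (k - i)) • ((f - a • 1) ^ i) v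
  have hcomm : Commute (f - a • 1) (a • 1) := (Commute.one_right _).smul_right a
  have hexpand : (f ^ k) v = ∑ i ∈ range (k + 1), g i := by
    rw [← sub_add_cancel f (a • 1), hcomm.add_pow, LinearMap.sum_apply]
    refine sum_congr rfl fun i _ => ?_
    simp only [g, mul_apply, natCast_apply, smul_pow, one_pow, LinearMap.smul_apply,
      one_apply, map_smul, ← Nat.cast_smul_eq_nsmul R, smul_smul, mul_comm]
  have hvanish : ∀ i, r ≤ i → ((f - a • 1) ^ i) v = 0 := fun i hi => by
    rw [← Nat.sub_add_cancel hi, pow_add, mul_apply, hr, map_zero]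
  calc (f ^ k) v = ∑ i ∈ range (k + 1), g i := hexpand
    _ = ∑ i ∈ range (k + 1 + r), g i :=
      sum_subset (range_mono (by omega)) fun i _ hi => by
        simp [g, Nat.choose_eq_zero_of_lt (by simpa using hi : k < i)]
    _ = ∑ i ∈ range r, g i :=
      (sum_subset (range_mono (by omega)) fun i _ hi => by
        simp [g, hvanish i (by simpa using hi)]).symm

variable {E : Type*} [NormedAddCommGroup E] [NormedSpace ℝ E] {f : End ℝ E} {v : E}

theorem tendsto_inv_choose_mul_pow_smul_pow_apply_of_abs_lt {a b : ℝ} {r : ℕ}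
    (hr : ((f - a • 1) ^ r) v = 0) (ha : a ≠ 0) (hab : |a| < |b|) (d : ℕ) :
    Tendsto (fun k : ℕ => ((k.choose d : ℝ) * b ^ k)⁻¹ • (f ^ k) v) atTop (𝓝 0) := by
  have hgeom : Tendsto (fun k : ℕ => (b ^ k)⁻¹ • (f ^ k) v) atTop (𝓝 0) := by
    simp_rw [pow_apply_eq_sum_choose_smul_of_pow_sub_smul_apply_eq_zero hr, smul_sum, smul_smul]
    simpa using tendsto_finsetSum (range r) fun i _ =>
      (tendsto_inv_pow_mul_choose_mul_pow_sub ha hab i).smul_const (((f - a • 1) ^ i) v)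
  refine squeeze_zero_norm' ?_ (tendsto_zero_iff_norm_tendsto_zero.1 hgeom)
  filter_upwards [eventually_ge_atTop d] with k hk
  have hchoose : 1 ≤ (k.choose d : ℝ) := by exact_mod_cast Nat.choose_pos hk
  rw [mul_inv, mul_smul, norm_smul, norm_inv, Real.norm_natCast]
  exact mul_le_of_le_one_left (norm_nonneg _) (inv_le_one_of_one_le₀ hchoose)

theorem tendsto_inv_choose_mul_pow_smul_pow_apply {a : ℝ} {d : ℕ}
    (hd : ((f - a • 1) ^ (d + 1)) v = 0) (ha : a ≠ 0) :
    Tendsto (fun k : ℕ => ((k.choose d : ℝ) * a ^ k)⁻¹ • (f ^ k) v) atTop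
      (𝓝 ((a ^ d)⁻¹ • ((f - a • 1) ^ d) v)) := by
  have hcoeff : ∀ i, (fun k : ℕ => ((k.choose d : ℝ) * a ^ k)⁻¹ * (k.choose i * a ^ (k - i)))
      =ᶠ[atTop] fun k => k.choose i / k.choose d * (a ^ i)⁻¹ := by
    intro i
    filter_upwards [eventually_ge_atTop i] with k hk
    rw [pow_sub₀ _ ha hk]
    field_simp
  have hlow : ∀ i ∈ range d, Tendsto (fun k : ℕ =>
      (((k.choose d : ℝ) * a ^ k)⁻¹ * (k.choose i * a ^ (k - i))) • ((f - a • 1) ^ i) v)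
      atTop (𝓝 0) := fun i hi => by
    simpa using (((tendsto_choose_div_choose_of_lt (mem_range.1 hi)).mul_const (a ^ i)⁻¹).congr'
      (hcoeff i).symm).smul_const (((f - a • 1) ^ i) v)
  have hdiag : Tendsto (fun k : ℕ => ((k.choose d : ℝ) * a ^ k)⁻¹ * (k.choose d * a ^ (k - d)))
      atTop (𝓝 (a ^ d)⁻¹) := by
    refine tendsto_const_nhds.congr' ?_
    filter_upwards [hcoeff d, eventually_ge_atTop d] with k hk hdk
    rw [hk, div_self (by exact_mod_cast (Nat.choose_pos hdk).ne'), one_mul]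
  simp_rw [pow_apply_eq_sum_choose_smul_of_pow_sub_smul_apply_eq_zero hd, smul_sum, smul_smul,
    sum_range_succ]
  simpa using (tendsto_finsetSum _ hlow).add (hdiag.smul_const (((f - a • 1) ^ d) v))

end Module.End

theorem positive_spectrum_dominant_direction_general
    (E : Type*) [NormedAddCommGroup E] [NormedSpace ℝ E] [FiniteDimensional ℝ E]
    (L : E →ₗ[ℝ] E)
    (hspec : ∀ z : ℂ, ((LinearMap.charpoly L).map (algebraMap ℝ ℂ)).IsRoot z →
      z.im = 0 ∧ 0 < z.re)
    (N : ℕ) (ρ : Fin N → ℝ) (hmono : StrictMono ρ)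
    (x : Fin N → E)
    (hgen : ∀ j, ∃ r : ℕ, ((L - ρ j • (1 : E →ₗ[ℝ] E)) ^ r) (x j) = 0)
    (M : Fin N) (hM : x M ≠ 0) (htop : ∀ j, M < j → x j = 0) :
    ∃ d : ℕ, ∃ w : E, w ≠ 0 ∧ L w = ρ M • w ∧
      Tendsto (fun k : ℕ => ((k.choose d : ℝ) * ρ M ^ k)⁻¹ • (L ^ k) (∑ j, x j))
        atTop (nhds w) := by
  have hpos : ∀ j, x j ≠ 0 → 0 < ρ j := fun j hj =>
    (Module.End.hasEigenvalue_of_pow_sub_smul_apply_eq_zero hj (hgen j).choose_spec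
      ).pos_of_forall_isRoot_charpoly_map_re_pos fun z hz => (hspec z hz).2
  obtain ⟨r, hr⟩ := hgen M
  obtain ⟨d, hd, hd1⟩ := Module.End.exists_pow_apply_ne_zero_and_pow_succ_apply_eq_zero hM hr
  set u := ((L - ρ M • 1) ^ d) (x M)
  have hLu : L u = ρ M • u := by
    rw [pow_succ', Module.End.mul_apply] at hd1
    simpa [sub_eq_zero] using hd1
  refine ⟨d, (ρ M ^ d)⁻¹ • u, smul_ne_zero (by simp [(hpos M hM).ne']) hd,
    by rw [map_smul, hLu, smul_comm], ?_⟩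
  have hterm : ∀ j, Tendsto (fun k : ℕ => ((k.choose d : ℝ) * ρ M ^ k)⁻¹ • (L ^ k) (x j)) atTop
      (𝓝 (if j = M then (ρ M ^ d)⁻¹ • u else 0)) := by
    intro j
    rcases lt_trichotomy j M with hjM | rfl | hMj
    · rw [if_neg hjM.ne]
      by_cases hj : x j = 0
      · simp [hj]
      · refine Module.End.tendsto_inv_choose_mul_pow_smul_pow_apply_of_abs_lt
          (hgen j).choose_spec (hpos j hj).ne' ?_ d
        rw [abs_of_pos (hpos j hj), abs_of_pos (hpos M hM)]
        exact hmono hjM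
    · simpa using Module.End.tendsto_inv_choose_mul_pow_smul_pow_apply hd1 (hpos j hM).ne'
    · simp [htop j hMj, hMj.ne']
  simpa [map_sum, smul_sum] using tendsto_finsetSum univ fun j _ => hterm j

/-- For a linear map all of whose complex eigenvalues are positive reals, with distinct
eigenvalues `ρ 0 < … < ρ (N-1)` and generalized eigenspace decomposition
`x = x 0 + … + x (N-1)`, letting `M` be the largest index with `x M ≠ 0`, there is
`d ∈ ℕ` such that `(C(k,d) ρ_M^k)⁻¹ • L^k x` converges to an eigenvector of `L`
for the eigenvalue `ρ M`. -/
theorem positive_spectrum_dominant_direction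
    (E : Type*) [NormedAddCommGroup E] [NormedSpace ℝ E] [FiniteDimensional ℝ E]
    (L : E →ₗ[ℝ] E)
    (hspec : ∀ z : ℂ, ((LinearMap.charpoly L).map (algebraMap ℝ ℂ)).IsRoot z →
      z.im = 0 ∧ 0 < z.re)
    (N : ℕ) (ρ : Fin N → ℝ) (hmono : StrictMono ρ)
    (heig : ∀ r : ℝ, (LinearMap.charpoly L).IsRoot r ↔ ∃ j, ρ j = r)
    (x : Fin N → E)
    (hgen : ∀ j, ∃ r : ℕ, ((L - ρ j • (1 : E →ₗ[ℝ] E)) ^ r) (x j) = 0)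
    (M : Fin N) (hM : x M ≠ 0) (htop : ∀ j, M < j → x j = 0) :
    ∃ d : ℕ, ∃ w : E, w ≠ 0 ∧ L w = ρ M • w ∧
      Tendsto (fun k : ℕ => ((k.choose d : ℝ) * ρ M ^ k)⁻¹ • (L ^ k) (∑ j, x j))
        atTop (nhds w) :=
  positive_spectrum_dominant_direction_general E L hspec N ρ hmono x hgen M hM htop
end

section
/- Let A ∈ ℝ^{n×n} and r ≥ 0. Let λ_1, ..., λ_N (N ≥ 0) be exactly the real eigenvalues of A lying in (r, +∞) that have odd algebraic multiplicity, and for each j let v_j be an eigenvector of A for λ_j. Then for every ε > 0 there exists a matrix Ã ∈ ℝ^{n×n} with ‖A − Ã‖ < ε such that: the real eigenvalues of Ã in (r, +∞) are exactly λ_1, ..., λ_N; each λ_j is a simple eigenvalue of Ã (algebraic multiplicity one); and for each j the eigenspace of Ã for λ_j is spanned by v_j. -/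
/-!
Extending the eigenvectors `v j` to a basis makes `A` block upper triangular with diagonal blocks
`diagonal lam` and some `C`, so `charpoly A = ∏ j, (X - lam j) * charpoly C` and every root of
`charpoly C` beyond `r` has even multiplicity. Such a `C` is a limit of matrices with no real
eigenvalue beyond `r`: a root `μ` of multiplicity at least two splits off, after a change of
basis, a diagonal block `!![μ, c; 0, μ]`; this is a limit of matrices `!![μ, t; s, μ]` with
`t * s < 0`, which have no real eigenvalue at all, and the complementary block is handled by
induction on its size. Replacing `C` by such an approximation leaves the `lam j` as the only real
eigenvalues beyond `r`, each simple with eigenvector `v j`.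
-/

open Module Matrix Polynomial

attribute [local instance] Matrix.linftyOpNormedAddCommGroup

universe u v

theorem Module.Basis.sumExtend_apply_inl {ι K V : Type*} [DivisionRing K] [AddCommGroup V]
    [Module K V] {v : ι → V} (hv : LinearIndependent K v) (i : ι) :
    Basis.sumExtend hv (Sum.inl i) = v i := by
  simp only [Basis.sumExtend, Basis.reindex_apply, Basis.extend_apply_self]
  rfl

theorem Polynomial.rootMultiplicity_prod_X_sub_C_mul {η R : Type*} [Fintype η] [CommRing R]
    [IsDomain R] {lam : η → R} (hinj : Function.Injective lam) {q : R[X]} (hq : q ≠ 0) (ρ : R)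
    [Decidable (∃ j, lam j = ρ)] :
    ((∏ i, (X - C (lam i))) * q).rootMultiplicity ρ
      = (if ∃ j, lam j = ρ then 1 else 0) + q.rootMultiplicity ρ := by
  classical
  have hprod : ∏ i, (X - C (lam i)) = ∏ a ∈ Finset.univ.image lam, (X - C a) :=
    (Finset.prod_image (f := fun a => X - C a) fun i _ j _ h => hinj h).symm
  rw [rootMultiplicity_mul (mul_ne_zero (hprod ▸ (monic_prod_of_monic _ _ fun a _ =>
    monic_X_sub_C a).ne_zero) hq), hprod, ← count_roots, roots_prod_X_sub_C,
    Multiset.count_eq_of_nodup (Finset.nodup _)]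
  simp

variable {K : Type v} [Field K] {ι : Type u} [Fintype ι] [DecidableEq ι]
  {κ : Type*} [Fintype κ] [DecidableEq κ]

/-- `b.matrixConj M = P * M * P⁻¹`, where the columns of `P` are the vectors of `b`. -/
noncomputable def Module.Basis.matrixConj (b : Basis κ K (ι → K)) :
    Matrix κ κ K ≃ₗ[K] Matrix ι ι K :=
  (Matrix.toLin b b).trans LinearMap.toMatrix'

namespace Module.Basis

variable (b : Basis κ K (ι → K))

theorem charpoly_matrixConj (M : Matrix κ κ K) : (b.matrixConj M).charpoly = M.charpoly := by
  rw [matrixConj, LinearEquiv.trans_apply, ← Matrix.charpoly_toLin', Matrix.toLin'_toMatrix',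
    Matrix.charpoly_toLin]

theorem matrixConj_mulVec_equivFun_symm (M : Matrix κ κ K) (x : κ → K) :
    b.matrixConj M *ᵥ b.equivFun.symm x = b.equivFun.symm (M *ᵥ x) := by
  rw [matrixConj, LinearEquiv.trans_apply, ← Matrix.toLin'_apply, Matrix.toLin'_toMatrix',
    Matrix.toLin_apply, ← equivFun_apply, LinearEquiv.apply_symm_apply, equivFun_symm_apply]

theorem matrixConj_mulVec_eq_smul_iff (M : Matrix κ κ K) (μ : K) (w : ι → K) :
    b.matrixConj M *ᵥ w = μ • w ↔ M *ᵥ b.equivFun w = μ • b.equivFun w := by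
  conv_lhs => rw [← b.equivFun.symm_apply_apply w, matrixConj_mulVec_equivFun_symm, ← map_smul]
  exact b.equivFun.symm.injective.eq_iff

theorem matrixConj_toMatrix_toLin' (A : Matrix ι ι K) :
    b.matrixConj (LinearMap.toMatrix b b (Matrix.toLin' A)) = A := by
  rw [matrixConj, LinearEquiv.trans_apply, Matrix.toLin_toMatrix, LinearMap.toMatrix'_toLin']

end Module.Basis

theorem Matrix.isRoot_charpoly_iff_exists_mulVec_eq_smul {A : Matrix ι ι K} {μ : K} :
    A.charpoly.IsRoot μ ↔ ∃ x ≠ 0, A *ᵥ x = μ • x := by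
  rw [← Matrix.charpoly_toLin', ← Module.End.hasEigenvalue_iff_isRoot_charpoly]
  constructor
  · intro h
    obtain ⟨x, hx, hx0⟩ := h.exists_hasEigenvector
    exact ⟨x, hx0, by simpa using Module.End.mem_eigenspace_iff.1 hx⟩
  · rintro ⟨x, hx0, hx⟩
    exact Module.End.hasEigenvalue_of_hasEigenvector
      ⟨Module.End.mem_eigenspace_iff.2 (by simpa using hx), hx0⟩

theorem Matrix.exists_basis_eq_matrixConj_fromBlocks {η : Type*} [Fintype η] [DecidableEq η]
    (A : Matrix ι ι K) {v : η → ι → K} (hv : LinearIndependent K v) (D : Matrix η η K)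
    (hAv : ∀ j, A *ᵥ v j = ∑ i, D i j • v i) :
    ∃ (κ : Type (max u v)) (_ : Fintype κ) (_ : DecidableEq κ) (b : Basis (η ⊕ κ) K (ι → K))
      (B : Matrix η κ K) (C : Matrix κ κ K),
      (∀ j, b (Sum.inl j) = v j) ∧ A = b.matrixConj (fromBlocks D B 0 C) := by
  classical
  set b := Basis.sumExtend hv
  have := Module.Finite.finite_basis b
  have : Fintype (Basis.sumExtendIndex hv) :=
    have := Finite.of_injective _ (Sum.inr_injective (α := η) (β := Basis.sumExtendIndex hv))
    Fintype.ofFinite _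
  have hb : ∀ j, b (Sum.inl j) = v j := Basis.sumExtend_apply_inl hv
  set M := LinearMap.toMatrix b b (Matrix.toLin' A)
  have hcol : ∀ j, (fun i => M i (Sum.inl j)) = Sum.elim (fun i => D i j) 0 := by
    intro j
    have : A *ᵥ v j = ∑ i, Sum.elim (fun i => D i j) 0 i • b i := by
      simp [Fintype.sum_sum_type, hAv, hb]
    simp only [M, LinearMap.toMatrix_apply, Matrix.toLin'_apply, hb, this, b.repr_sum_self]
  refine ⟨_, inferInstance, inferInstance, b, M.toBlocks₁₂, M.toBlocks₂₂, hb, ?_⟩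
  have h₁₁ : M.toBlocks₁₁ = D := by
    ext i j; exact congrFun (hcol j) (Sum.inl i)
  have h₂₁ : M.toBlocks₂₁ = 0 := by
    ext k j; exact congrFun (hcol j) (Sum.inr k)
  rw [← h₁₁, ← h₂₁, fromBlocks_toBlocks, b.matrixConj_toMatrix_toLin']

theorem Matrix.exists_linearIndependent_pair_of_two_le_rootMultiplicity (A : Matrix ι ι K) {μ : K}
    (hμ : 2 ≤ A.charpoly.rootMultiplicity μ) :
    ∃ (u : Fin 2 → ι → K) (c : K), LinearIndependent K u ∧
      ∀ j, A *ᵥ u j = ∑ i, !![μ, c; 0, μ] i j • u i := by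
  obtain ⟨x, hx0, hx⟩ := isRoot_charpoly_iff_exists_mulVec_eq_smul.1 <|
    (rootMultiplicity_pos (charpoly_monic A).ne_zero (x := μ)).1 (by omega)
  obtain ⟨κ, _, _, b, B, C, -, hA⟩ := exists_basis_eq_matrixConj_fromBlocks A
    (v := fun _ : Unit => x) (linearIndependent_unique_iff.2 hx0) (diagonal fun _ => μ)
    (by simpa using hx)
  have hcharpoly : A.charpoly = (X - Polynomial.C μ) * C.charpoly := by
    rw [hA, b.charpoly_matrixConj, charpoly_fromBlocks_zero₂₁, charpoly_diagonal]
    simp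
  have hCμ : C.charpoly.IsRoot μ := by
    rw [hcharpoly,
      rootMultiplicity_mul (mul_ne_zero (X_sub_C_ne_zero μ) (charpoly_monic C).ne_zero),
      rootMultiplicity_X_sub_C_self] at hμ
    exact (rootMultiplicity_pos (charpoly_monic C).ne_zero (x := μ)).1 (by omega)
  obtain ⟨y, hy0, hy⟩ := isRoot_charpoly_iff_exists_mulVec_eq_smul.1 hCμ
  set c := (B *ᵥ y) ()
  set xs : Fin 2 → Unit ⊕ κ → K := ![Pi.single (Sum.inl ()) 1, Sum.elim 0 y]
  have hxs : ∀ j, fromBlocks (diagonal fun _ : Unit => μ) B 0 C *ᵥ xs j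
      = ∑ i, !![μ, c; 0, μ] i j • xs i := by
    intro j
    fin_cases j <;> ext (i | k) <;> simp [xs, c, fromBlocks_mulVec, Fin.sum_univ_two, hy]
  have hli : LinearIndependent K xs := by
    rw [LinearIndependent.pair_iff]
    intro s t hst
    have hs : s = 0 := by simpa [xs] using congrFun hst (Sum.inl ())
    subst hs
    refine ⟨rfl, (smul_eq_zero.1 ?_).resolve_right hy0⟩
    ext k
    simpa [xs] using congrFun hst (Sum.inr k)
  refine ⟨b.equivFun.symm ∘ xs, c, hli.map' _ b.equivFun.symm.ker, fun j => ?_⟩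
  simp only [Function.comp_apply, hA, b.matrixConj_mulVec_equivFun_symm, hxs, map_sum, map_smul]

theorem Matrix.charpoly_upperTriangular_fin_two (μ c : K) :
    (!![μ, c; 0, μ]).charpoly = (X - Polynomial.C μ) * (X - Polynomial.C μ) := by
  rw [charpoly_fin_two, trace_fin_two_of, det_fin_two_of]
  simp only [map_add, map_mul, mul_zero, sub_zero]
  ring

theorem Matrix.not_isRoot_charpoly_of_mul_neg {μ t s : ℝ} (hts : t * s < 0) (ρ : ℝ) :
    ¬ (!![μ, t; s, μ]).charpoly.IsRoot ρ := by
  rw [charpoly_fin_two, IsRoot.def]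
  simp only [eval_add, eval_sub, eval_pow, eval_mul, eval_X, eval_C, trace_fin_two_of,
    det_fin_two_of]
  nlinarith [sq_nonneg (ρ - μ)]

open Filter Topology in
theorem Matrix.mem_closure_forall_not_isRoot_charpoly_fin_two (μ c : ℝ) :
    !![μ, c; 0, μ] ∈ closure {T : Matrix (Fin 2) (Fin 2) ℝ | ∀ ρ, ¬ T.charpoly.IsRoot ρ} := by
  -- `σ` is a sign of `c`, so the off-diagonal product `-δ * (|c| + δ)` is negative for `δ > 0`.
  set σ : ℝ := if 0 ≤ c then 1 else -1
  have hσ : 0 ≤ c * σ ∧ σ * σ = 1 := by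
    simp only [σ]; split_ifs <;> constructor <;> linarith
  have hcont : Continuous fun δ : ℝ => !![μ, c + δ * σ; -(δ * σ), μ] := by
    refine continuous_pi fun i => continuous_pi fun j => ?_
    fin_cases i <;> fin_cases j <;> simp <;> fun_prop
  have hlim : Tendsto (fun δ : ℝ => !![μ, c + δ * σ; -(δ * σ), μ]) (𝓝[>] 0)
      (𝓝 !![μ, c; 0, μ]) := by
    simpa using (hcont.tendsto 0).mono_left nhdsWithin_le_nhds
  refine mem_closure_of_tendsto hlim (eventually_nhdsWithin_of_forall fun δ hδ =>
    not_isRoot_charpoly_of_mul_neg ?_)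
  have hδ : 0 < δ := hδ
  have : (c + δ * σ) * -(δ * σ) = -(δ * (c * σ)) - δ ^ 2 * (σ * σ) := by ring
  rw [this, hσ.2]
  nlinarith [mul_nonneg hδ.le hσ.1]

theorem Matrix.mem_closure_forall_not_isRoot_charpoly {s : Set ℝ} (M : Matrix ι ι ℝ)
    (hM : ∀ ρ ∈ s, Even (M.charpoly.rootMultiplicity ρ)) :
    M ∈ closure {M' : Matrix ι ι ℝ | ∀ ρ ∈ s, ¬ M'.charpoly.IsRoot ρ} := by
  induction hn : Fintype.card ι using Nat.strong_induction_on generalizing ι M with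
  | _ n ih =>
  by_cases hroot : ∃ μ ∈ s, M.charpoly.IsRoot μ
  swap
  · push Not at hroot
    exact subset_closure hroot
  obtain ⟨μ, hμs, hμ⟩ := hroot
  have h2 : 2 ≤ M.charpoly.rootMultiplicity μ := by
    obtain ⟨k, hk⟩ := hM μ hμs
    have := (rootMultiplicity_pos (charpoly_monic M).ne_zero).2 hμ
    omega
  obtain ⟨u, c, hu, hMu⟩ := exists_linearIndependent_pair_of_two_le_rootMultiplicity M h2
  obtain ⟨κ, _, _, b, B, C, -, hMb⟩ := exists_basis_eq_matrixConj_fromBlocks M hu _ hMu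
  have hcharpoly : M.charpoly = (X - Polynomial.C μ) * (X - Polynomial.C μ) * C.charpoly := by
    rw [hMb, b.charpoly_matrixConj, charpoly_fromBlocks_zero₂₁, charpoly_upperTriangular_fin_two]
  have hC : ∀ ρ ∈ s, Even (C.charpoly.rootMultiplicity ρ) := by
    intro ρ hρ
    have := hM ρ hρ
    rw [hcharpoly, rootMultiplicity_mul (by simpa [← hcharpoly] using (charpoly_monic M).ne_zero),
      rootMultiplicity_mul (mul_ne_zero (X_sub_C_ne_zero μ) (X_sub_C_ne_zero μ))] at this
    exact (Nat.even_add.1 this).1 ⟨_, rfl⟩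
  have hcard : Fintype.card κ < n := by
    have := (Module.finrank_eq_card_basis b).symm
    rw [Module.finrank_fintype_fun_eq_card, Fintype.card_sum, Fintype.card_fin] at this
    omega
  have hcont : Continuous (Function.uncurry
      fun (T : Matrix (Fin 2) (Fin 2) ℝ) (C' : Matrix κ κ ℝ) =>
      b.matrixConj (fromBlocks T B 0 C')) :=
    b.matrixConj.toLinearMap.continuous_of_finiteDimensional.comp
      (continuous_fst.matrix_fromBlocks continuous_const continuous_const continuous_snd)
  rw [hMb]
  refine map_mem_closure₂ (f := fun T C' => b.matrixConj (fromBlocks T B 0 C')) hcont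
    (mem_closure_forall_not_isRoot_charpoly_fin_two μ c) (ih _ hcard C hC rfl)
    fun T hT C' hC' ρ hρ => ?_
  rw [b.charpoly_matrixConj, charpoly_fromBlocks_zero₂₁, IsRoot.def, eval_mul, mul_eq_zero]
  exact not_or.2 ⟨hT ρ, hC' ρ hρ⟩

theorem Matrix.fromBlocks_diagonal_mulVec_eq_smul_iff {η : Type*} [Fintype η] [DecidableEq η]
    {lam : η → K} (hinj : Function.Injective lam) (B : Matrix η κ K) {C : Matrix κ κ K} {j : η}
    (hC : ¬ C.charpoly.IsRoot (lam j)) (x : η ⊕ κ → K) :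
    fromBlocks (diagonal lam) B 0 C *ᵥ x = lam j • x ↔
      ∃ a : K, x = a • Pi.single (Sum.inl j) 1 := by
  constructor
  · intro h
    rw [fromBlocks_mulVec] at h
    have hinr : x ∘ Sum.inr = 0 := by
      by_contra hne
      refine hC (isRoot_charpoly_iff_exists_mulVec_eq_smul.2 ⟨_, hne, ?_⟩)
      ext k
      simpa using congrFun h (Sum.inr k)
    have hinl : ∀ i ≠ j, x (Sum.inl i) = 0 := by
      intro i hij
      have := congrFun h (Sum.inl i)
      simp only [hinr, mulVec_zero, add_zero, mulVec_diagonal, Sum.elim_inl, Pi.smul_apply,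
        Function.comp_apply, smul_eq_mul] at this
      have hsub : (lam i - lam j) * x (Sum.inl i) = 0 := by rw [sub_mul, this, sub_self]
      exact (mul_eq_zero.1 hsub).resolve_left (sub_ne_zero.2 fun h => hij (hinj h))
    refine ⟨x (Sum.inl j), funext fun k => ?_⟩
    rcases k with i | k
    · obtain rfl | hij := eq_or_ne i j
      · simp
      · simp [hij, hinl i hij]
    · simpa using congrFun hinr k
  · rintro ⟨a, rfl⟩
    rw [mulVec_smul, mulVec_single_one, smul_comm]
    ext (i | k)
    · obtain rfl | hij := eq_or_ne i j
      · simp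
      · simp [hij]
    · simp

namespace Module.Basis

variable {η : Type*} [Fintype η] [DecidableEq η] (b : Basis (η ⊕ κ) K (ι → K)) {lam : η → K}

theorem matrixConj_fromBlocks_diagonal_mulVec_eq_smul_iff (hinj : Function.Injective lam)
    (B : Matrix η κ K) {C : Matrix κ κ K} {j : η} (hC : ¬ C.charpoly.IsRoot (lam j))
    (w : ι → K) :
    b.matrixConj (fromBlocks (diagonal lam) B 0 C) *ᵥ w = lam j • w ↔
      ∃ a : K, w = a • b (Sum.inl j) := by
  rw [matrixConj_mulVec_eq_smul_iff, fromBlocks_diagonal_mulVec_eq_smul_iff hinj B hC]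
  refine exists_congr fun a => ?_
  rw [← Basis.equivFun_symm_single, ← map_smul, LinearEquiv.eq_symm_apply]

theorem rootMultiplicity_charpoly_matrixConj_fromBlocks_diagonal (hinj : Function.Injective lam)
    (B : Matrix η κ K) (C : Matrix κ κ K) (ρ : K) [Decidable (∃ j, lam j = ρ)] :
    (b.matrixConj (fromBlocks (diagonal lam) B 0 C)).charpoly.rootMultiplicity ρ
      = (if ∃ j, lam j = ρ then 1 else 0) + C.charpoly.rootMultiplicity ρ := by
  rw [b.charpoly_matrixConj, charpoly_fromBlocks_zero₂₁, charpoly_diagonal,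
    rootMultiplicity_prod_X_sub_C_mul hinj (charpoly_monic C).ne_zero]

end Module.Basis

theorem trapped_point_perturbation_general
    (n N : ℕ) (A : Matrix (Fin n) (Fin n) ℝ) (r : ℝ)
    (lam : Fin N → ℝ) (hinj : Function.Injective lam)
    (hlam : ∀ ρ : ℝ,
      (r < ρ ∧ Odd ((Matrix.charpoly A).rootMultiplicity ρ)) ↔ ∃ j, lam j = ρ)
    (v : Fin N → Fin n → ℝ) (hv0 : ∀ j, v j ≠ 0)
    (hv : ∀ j, A.mulVec (v j) = lam j • v j) :
    ∀ ε > 0, ∃ Atld : Matrix (Fin n) (Fin n) ℝ, ‖A - Atld‖ < ε ∧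
      (∀ ρ : ℝ, r < ρ → ((Matrix.charpoly Atld).IsRoot ρ ↔ ∃ j, lam j = ρ)) ∧
      (∀ j, (Matrix.charpoly Atld).rootMultiplicity (lam j) = 1) ∧
      (∀ j, ∀ w : Fin n → ℝ, Atld.mulVec w = lam j • w ↔ ∃ c : ℝ, w = c • v j) := by
  intro ε hε
  have hli : LinearIndependent ℝ v := Module.End.eigenvectors_linearIndependent' (toLin' A) lam
    hinj v fun j => ⟨Module.End.mem_eigenspace_iff.2 (by simpa using hv j), hv0 j⟩
  obtain ⟨κ, _, _, b, B, C, hb, hA⟩ := exists_basis_eq_matrixConj_fromBlocks A hli (diagonal lam)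
    fun j => by simp [hv, diagonal_apply]
  have hmult := b.rootMultiplicity_charpoly_matrixConj_fromBlocks_diagonal hinj B
  have hC : ∀ ρ ∈ Set.Ioi r, Even (C.charpoly.rootMultiplicity ρ) := fun ρ hρ => by
    have := hlam ρ
    rw [hA, hmult] at this
    by_cases hρ' : ∃ j, lam j = ρ <;> simp_all [parity_simps]
  have hlam_gt : ∀ j, r < lam j := fun j => ((hlam _).2 ⟨j, rfl⟩).1
  have hgood : A ∈ closure {Atld | (∀ ρ, r < ρ → (Atld.charpoly.IsRoot ρ ↔ ∃ j, lam j = ρ)) ∧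
      (∀ j, Atld.charpoly.rootMultiplicity (lam j) = 1) ∧
      (∀ j, ∀ w, Atld *ᵥ w = lam j • w ↔ ∃ c : ℝ, w = c • v j)} := by
    rw [hA]
    refine map_mem_closure (f := fun C' => b.matrixConj (fromBlocks (diagonal lam) B 0 C'))
      (b.matrixConj.toLinearMap.continuous_of_finiteDimensional.comp
      (continuous_const.matrix_fromBlocks continuous_const continuous_const continuous_id))
      (mem_closure_forall_not_isRoot_charpoly C hC) fun C' hC' => ⟨fun ρ hρ => ?_, fun j => ?_,
      fun j w => ?_⟩
    · rw [← rootMultiplicity_pos (charpoly_monic _).ne_zero, hmult,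
        rootMultiplicity_eq_zero (hC' ρ hρ)]
      split_ifs <;> simp_all
    · rw [hmult, rootMultiplicity_eq_zero (hC' _ (hlam_gt j))]
      simp
    · rw [b.matrixConj_fromBlocks_diagonal_mulVec_eq_smul_iff hinj B (hC' _ (hlam_gt j)), hb]
  -- The `linfty` operator norm induces the product topology used for `closure` above.
  obtain ⟨Atld, hAtld, hdist⟩ := Metric.mem_closure_iff.1 hgood ε hε
  exact ⟨Atld, by rwa [dist_eq_norm] at hdist, hAtld⟩

/-- Given a real matrix `A`, a threshold `r ≥ 0`, and eigenvectors `v j` for the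
eigenvalues `lam j`, which are exactly the real eigenvalues of `A` in `(r, ∞)` of odd
algebraic multiplicity, there are arbitrarily small perturbations `Ã` of `A` whose real
eigenvalues in `(r, ∞)` are exactly the `lam j`, each being simple with eigenspace
spanned by `v j`. -/
theorem trapped_point_perturbation
    (n N : ℕ) (A : Matrix (Fin n) (Fin n) ℝ) (r : ℝ) (hr : 0 ≤ r)
    (lam : Fin N → ℝ) (hinj : Function.Injective lam)
    (hlam : ∀ ρ : ℝ,
      (r < ρ ∧ Odd ((Matrix.charpoly A).rootMultiplicity ρ)) ↔ ∃ j, lam j = ρ)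
    (v : Fin N → Fin n → ℝ) (hv0 : ∀ j, v j ≠ 0)
    (hv : ∀ j, A.mulVec (v j) = lam j • v j) :
    ∀ ε > 0, ∃ Atld : Matrix (Fin n) (Fin n) ℝ, ‖A - Atld‖ < ε ∧
      (∀ ρ : ℝ, r < ρ → ((Matrix.charpoly Atld).IsRoot ρ ↔ ∃ j, lam j = ρ)) ∧
      (∀ j, (Matrix.charpoly Atld).rootMultiplicity (lam j) = 1) ∧
      (∀ j, ∀ w : Fin n → ℝ, Atld.mulVec w = lam j • w ↔ ∃ c : ℝ, w = c • v j) :=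
  trapped_point_perturbation_general n N A r lam hinj hlam v hv0 hv
end

section
/- Let A ∈ ℝ^{n×n}, b ∈ ℝⁿ, B ∈ ℝ^{m×n}, η ∈ ℝ^m. Define Â ∈ ℝ^{(n+1)×(n+1)} with block form (A, b; 0, 1) and B̂ ∈ ℝ^{(m+1)×(n+1)} with block form (B, −η; 0, 1). Then the affine instance (A, b, B, η) is escaping if and only if the linear instance (Â, B̂) is escaping; that is, for all x ∈ ℝⁿ there exists k with f^k(x) ∉ P(B,η) (where f(x) = A x + b) if and only if for all y ∈ ℝ^{n+1} there exists k with Â^k y ∉ P(B̂). -/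
/-!
A point of `ℝⁿ⁺¹` with last coordinate `t > 0` is `t • (x, 1)`, and `Â` acts on such points
as `f(x) = A x + b` does on `x`: `Âᵏ (t • (x, 1)) = t • (fᵏ x, 1)`. Since
`B̂ (x, 1) = (B x - η, 1)`, the orbit of `t • (x, 1)` leaves `P(B̂)` exactly when the orbit of
`x` leaves `P(B, η)`. A point with last coordinate `t ≤ 0` is already outside `P(B̂)`, because
the last row of `B̂` reads off `t`.
-/

/-- The homogenisation `Â = (A, b; 0, 1)` of the affine map `x ↦ A x + b`. -/
def hatA {n : ℕ} (A : Matrix (Fin n) (Fin n) ℝ) (b : Fin n → ℝ) :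
    Matrix (Fin (n + 1)) (Fin (n + 1)) ℝ :=
  Matrix.of fun i j =>
    if hi : (i : ℕ) < n then
      if hj : (j : ℕ) < n then A ⟨i, hi⟩ ⟨j, hj⟩ else b ⟨i, hi⟩
    else
      if (j : ℕ) < n then 0 else 1

/-- The homogenisation `B̂ = (B, -η; 0, 1)` of the affine constraints `B x ⊳ η`. -/
def hatB {m n : ℕ} (B : Matrix (Fin m) (Fin n) ℝ) (η : Fin m → ℝ) :
    Matrix (Fin (m + 1)) (Fin (n + 1)) ℝ :=
  Matrix.of fun i j =>
    if hi : (i : ℕ) < m then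
      if hj : (j : ℕ) < n then B ⟨i, hi⟩ ⟨j, hj⟩ else -η ⟨i, hi⟩
    else
      if (j : ℕ) < n then 0 else 1

open Matrix

theorem Fin.smul_snoc_one {R : Type*} [MulOneClass R] {n : ℕ} (t : R) (x : Fin n → R) :
    t • (Fin.snoc x 1 : Fin (n + 1) → R) = Fin.snoc (t • x) t := by
  ext i
  refine Fin.lastCases ?_ (fun i => ?_) i <;> simp

theorem hatA_mulVec_snoc_one {n : ℕ} (A : Matrix (Fin n) (Fin n) ℝ) (b : Fin n → ℝ)
    (x : Fin n → ℝ) :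
    hatA A b *ᵥ Fin.snoc x 1 = Fin.snoc (A *ᵥ x + b) 1 := by
  ext i
  refine Fin.lastCases ?_ (fun i => ?_) i <;>
    simp [Matrix.mulVec, dotProduct, Fin.sum_univ_castSucc, hatA]

theorem hatA_pow_mulVec_snoc_one {n : ℕ} (A : Matrix (Fin n) (Fin n) ℝ) (b : Fin n → ℝ)
    (x : Fin n → ℝ) (k : ℕ) :
    hatA A b ^ k *ᵥ Fin.snoc x 1 = Fin.snoc ((fun y => A *ᵥ y + b)^[k] x) 1 := by
  induction k with
  | zero => simp
  | succ k ih =>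
    rw [pow_succ', ← Matrix.mulVec_mulVec, ih, Function.iterate_succ_apply',
      hatA_mulVec_snoc_one]

theorem hatB_mulVec_snoc_one_castSucc {m n : ℕ} (B : Matrix (Fin m) (Fin n) ℝ)
    (η : Fin m → ℝ) (z : Fin n → ℝ) (j : Fin m) :
    (hatB B η *ᵥ Fin.snoc z 1) j.castSucc = (B *ᵥ z) j - η j := by
  simp [Matrix.mulVec, dotProduct, Fin.sum_univ_castSucc, hatB, sub_eq_add_neg]

theorem hatB_mulVec_last {m n : ℕ} (B : Matrix (Fin m) (Fin n) ℝ) (η : Fin m → ℝ)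
    (y : Fin (n + 1) → ℝ) :
    (hatB B η *ᵥ y) (Fin.last m) = y (Fin.last n) := by
  simp [Matrix.mulVec, dotProduct, Fin.sum_univ_castSucc, hatB]

theorem hatB_mulVec_snoc_one_pos_iff {m n : ℕ} (B : Matrix (Fin m) (Fin n) ℝ)
    (η : Fin m → ℝ) (z : Fin n → ℝ) :
    (∀ j, 0 < (hatB B η *ᵥ Fin.snoc z 1) j) ↔ ∀ j, η j < (B *ᵥ z) j := by
  simp only [Fin.forall_fin_succ', hatB_mulVec_snoc_one_castSucc, sub_pos,
    hatB_mulVec_last, Fin.snoc_last, zero_lt_one, and_true]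

theorem forall_pos_smul_iff {ι R : Type*} [MulZeroClass R] [Preorder R] [PosMulStrictMono R]
    [PosMulReflectLT R] {t : R} (ht : 0 < t) (v : ι → R) :
    (∀ j, 0 < (t • v) j) ↔ ∀ j, 0 < v j := by
  simp only [Pi.smul_apply, smul_eq_mul, mul_pos_iff_of_pos_left ht]

theorem homogenised_orbit_pos_iff {m n : ℕ} (A : Matrix (Fin n) (Fin n) ℝ) (b : Fin n → ℝ)
    (B : Matrix (Fin m) (Fin n) ℝ) (η : Fin m → ℝ) (x : Fin n → ℝ) {t : ℝ} (ht : 0 < t)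
    (k : ℕ) :
    (∀ j, 0 < (hatB B η *ᵥ (hatA A b ^ k *ᵥ t • Fin.snoc x 1)) j) ↔
      ∀ j, η j < (B *ᵥ (fun y => A *ᵥ y + b)^[k] x) j := by
  rw [Matrix.mulVec_smul, Matrix.mulVec_smul, forall_pos_smul_iff ht, hatA_pow_mulVec_snoc_one,
    hatB_mulVec_snoc_one_pos_iff]

theorem eq_smul_snoc_one_of_last_ne_zero {K : Type*} [GroupWithZero K] {n : ℕ}
    (y : Fin (n + 1) → K) (hy : y (Fin.last n) ≠ 0) :
    y = y (Fin.last n) • Fin.snoc ((y (Fin.last n))⁻¹ • Fin.init y) 1 := by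
  rw [Fin.smul_snoc_one, smul_smul, mul_inv_cancel₀ hy, one_smul, Fin.snoc_init_self]

/-- The affine instance `(A, b, B, η)` is escaping if and only if its homogenisation
`(Â, B̂)` is escaping. -/
theorem affine_escape_iff_homogenised_escape
    (n m : ℕ) (A : Matrix (Fin n) (Fin n) ℝ) (b : Fin n → ℝ)
    (B : Matrix (Fin m) (Fin n) ℝ) (η : Fin m → ℝ) :
    (∀ x : Fin n → ℝ, ∃ k : ℕ,
        ¬ ∀ j : Fin m, η j < B.mulVec ((fun y => A.mulVec y + b)^[k] x) j) ↔
      (∀ y : Fin (n + 1) → ℝ, ∃ k : ℕ,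
        ¬ ∀ j : Fin (m + 1), 0 < (hatB B η).mulVec (((hatA A b) ^ k).mulVec y) j) := by
  constructor
  · intro h y
    by_cases hy : 0 < y (Fin.last n)
    · obtain ⟨k, hk⟩ := h ((y (Fin.last n))⁻¹ • Fin.init y)
      refine ⟨k, ?_⟩
      rwa [eq_smul_snoc_one_of_last_ne_zero y hy.ne', homogenised_orbit_pos_iff A b B η _ hy]
    · refine ⟨0, fun hpos => hy ?_⟩
      simpa only [pow_zero, one_mulVec, hatB_mulVec_last] using hpos (Fin.last m)
  · intro h x
    obtain ⟨k, hk⟩ := h (Fin.snoc x 1)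
    refine ⟨k, ?_⟩
    rwa [← one_smul ℝ (Fin.snoc x 1 : Fin (n + 1) → ℝ),
      homogenised_orbit_pos_iff A b B η x one_pos] at hk
end

section
/- Let A ∈ ℝ^{n×n}, b ∈ ℝⁿ, B ∈ ℝ^{m×n}, η ∈ ℝ^m, and f(x) = A x + b. Suppose A has a real eigenvalue λ > 1 with an eigenvector v ∈ ℝⁿ satisfying B_j v > 0 for all j ∈ {1,...,m}. Then the affine instance (A, b, B, η) is trapped: there exists x ∈ ℝⁿ with B_j (f^k(x)) > η_j for all j ∈ {1,...,m} and all k ≥ 0. -/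
/-!
By the Fitting decomposition of `A - 1`, write `b = b₁ + (A - 1) q` with `b₁` in the generalized
eigenspace of `A` for the eigenvalue `1`. Then `p = -q` satisfies `f p = p + b₁`, so the orbit
of `p` is `p + ∑_{i<k} Aⁱ b₁ = p + ∑_j (k choose j+1) (A - 1)ʲ b₁`, which grows only
polynomially in `k`. Starting instead at `p + c • v` adds `c λᵏ v` to the `k`-th iterate; as
`B v > 0` and `λ > 1`, this term beats the polynomial drift for `c` large, uniformly in `k`.
-/

open Filter Asymptotics Finset

namespace Module.End

section Semiring

variable {R M : Type*} [Semiring R]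

section AddCommMonoid

variable [AddCommMonoid M] [Module R M]

theorem pow_apply_of_apply_eq_smul {E : Module.End R M} {μ : R} {v : M} (hv : E v = μ • v)
    (k : ℕ) : (E ^ k) v = μ ^ k • v := by
  induction k with
  | zero => simp
  | succ k ih => rw [pow_succ, mul_apply, hv, map_smul, ih, smul_smul, pow_succ']

theorem iterate_affine_add (E : Module.End R M) (b x y : M) (k : ℕ) :
    (fun z => E z + b)^[k] (x + y) = (fun z => E z + b)^[k] x + (E ^ k) y := by
  induction k with
  | zero => simp
  | succ k ih =>
    simp only [Function.iterate_succ_apply', ih, map_add, pow_succ', mul_apply]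
    abel

theorem iterate_affine_eq_add_sum {E : Module.End R M} {b p b₁ : M} (hp : E p + b = p + b₁)
    (k : ℕ) : (fun z => E z + b)^[k] p = p + ∑ i ∈ range k, (E ^ i) b₁ := by
  induction k with
  | zero => simp
  | succ k ih =>
    rw [Function.iterate_succ_apply', ih, map_add, add_right_comm, hp, sum_range_succ']
    simp only [pow_succ', mul_apply, pow_zero, one_apply, map_sum]
    abel

end AddCommMonoid

section AddCommGroup

variable [AddCommGroup M] [Module R M]

theorem pow_apply_eq_sum_choose {E : Module.End R M} {x : M} {N : ℕ}
    (hx : ((E - 1) ^ N) x = 0) (i : ℕ) :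
    (E ^ i) x = ∑ j ∈ range N, i.choose j • ((E - 1) ^ j) x := by
  set g := E - 1
  have hbinom : (E ^ i) x = ∑ j ∈ range (i + 1), i.choose j • (g ^ j) x := by
    rw [← sub_add_cancel E 1, (Commute.one_right g).add_pow, LinearMap.sum_apply]
    simp only [one_pow, mul_one, mul_apply, natCast_apply, map_nsmul]
  have hpad : ∀ s ≤ i + 1 + N, (∀ j, s ≤ j → i.choose j • (g ^ j) x = 0) →
      ∑ j ∈ range s, i.choose j • (g ^ j) x =
        ∑ j ∈ range (i + 1 + N), i.choose j • (g ^ j) x :=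
    fun s hle hs => sum_subset (range_subset_range.2 hle) fun j _ hj => hs j (by simpa using hj)
  rw [hbinom, hpad (i + 1) (by omega) fun j hj => by rw [Nat.choose_eq_zero_of_lt hj, zero_smul],
    hpad N (by omega) fun j hj => by rw [pow_map_zero_of_le hj hx, smul_zero]]

theorem sum_range_pow_apply_eq_sum_choose {E : Module.End R M} {x : M} {N : ℕ}
    (hx : ((E - 1) ^ N) x = 0) (k : ℕ) :
    ∑ i ∈ range k, (E ^ i) x = ∑ j ∈ range N, k.choose (j + 1) • ((E - 1) ^ j) x := by
  induction k with
  | zero => simp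
  | succ k ih =>
    rw [sum_range_succ, ih, pow_apply_eq_sum_choose hx k, ← sum_add_distrib]
    exact sum_congr rfl fun j _ => by rw [Nat.choose_succ_succ', add_smul, add_comm]

end AddCommGroup

end Semiring

theorem exists_apply_add_eq_add_and_pow_sub_one_apply_eq_zero {R M : Type*} [Ring R]
    [AddCommGroup M] [Module R M] [IsArtinian R M] (E : Module.End R M) (b : M) :
    ∃ p b₁ : M, ∃ N : ℕ, E p + b = p + b₁ ∧ ((E - 1) ^ N) b₁ = 0 := by
  obtain ⟨N, hN⟩ :=
    (LinearMap.eventually_codisjoint_ker_pow_range_pow (E - 1)).exists_forall_of_atTop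
  have hb : b ∈ LinearMap.ker ((E - 1) ^ (N + 1)) ⊔ LinearMap.range ((E - 1) ^ (N + 1)) :=
    (hN (N + 1) N.le_succ).eq_top ▸ Submodule.mem_top
  obtain ⟨b₁, hb₁, _, ⟨y, rfl⟩, rfl⟩ := Submodule.mem_sup.1 hb
  refine ⟨-((E - 1) ^ N) y, b₁, N + 1, ?_, hb₁⟩
  rw [pow_succ', mul_apply, LinearMap.sub_apply, one_apply]
  simp only [map_neg]
  abel

end Module.End

open Module.End

theorem isBigO_choose_pow {lam : ℝ} (hlam : 1 < lam) (d : ℕ) :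
    (fun k : ℕ => (k.choose d : ℝ)) =O[atTop] (lam ^ ·) := by
  refine IsBigO.trans ?_ (isLittleO_pow_const_const_pow_of_one_lt (R := ℝ) d hlam).isBigO
  refine IsBigO.of_bound 1 (Eventually.of_forall fun k => ?_)
  simp only [Real.norm_natCast, one_mul, norm_pow]
  exact_mod_cast Nat.choose_le_pow k d

theorem isBigO_iterate_affine {R M : Type*} [Semiring R] [AddCommGroup M] [Module R M]
    {E : Module.End R M} {b p b₁ : M} {N : ℕ} (hp : E p + b = p + b₁)
    (hb₁ : ((E - 1) ^ N) b₁ = 0) (φ : M →+ ℝ) {lam : ℝ} (hlam : 1 < lam) :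
    (fun k => φ ((fun z => E z + b)^[k] p)) =O[atTop] (lam ^ ·) := by
  simp only [iterate_affine_eq_add_sum hp, sum_range_pow_apply_eq_sum_choose hb₁, map_add,
    map_sum, map_nsmul, nsmul_eq_mul']
  refine IsBigO.add ?_ (IsBigO.fun_sum fun j _ => (isBigO_choose_pow hlam _).const_mul_left _)
  simpa using (isBigO_choose_pow hlam 0).const_mul_left (φ p)

theorem eventually_forall_lt_add_mul_pow {lam β a : ℝ} {s : ℕ → ℝ} (hlam : 1 ≤ lam)
    (hβ : 0 < β) (hs : s =O[atTop] (lam ^ ·)) :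
    ∀ᶠ c in atTop, ∀ k, a < s k + c * (lam ^ k * β) := by
  obtain ⟨C, hC⟩ :=
    (isBigO_nat_atTop_iff fun k h => absurd h (pow_ne_zero k (by linarith))).1 hs
  filter_upwards [eventually_ge_atTop ((|a| + C + 1) / β)] with c hc k
  have hpow : 1 ≤ lam ^ k := one_le_pow₀ hlam
  have hs_ge : -(C * lam ^ k) ≤ s k := by
    refine neg_le_of_abs_le ?_
    simpa [abs_of_nonneg (zero_le_one.trans hlam)] using hC k
  have hc : |a| + C + 1 ≤ c * β := (div_le_iff₀ hβ).1 hc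
  calc a < |a| + 1 := by linarith [le_abs_self a]
    _ ≤ (|a| + 1) * lam ^ k := le_mul_of_one_le_right (by positivity) hpow
    _ = -(C * lam ^ k) + (|a| + C + 1) * lam ^ k := by ring
    _ ≤ s k + c * β * lam ^ k :=
      add_le_add hs_ge (mul_le_mul_of_nonneg_right hc (zero_le_one.trans hpow))
    _ = s k + c * (lam ^ k * β) := by ring

theorem affine_trapped_of_expanding_eigenvector_general
    (n m : ℕ) (A : Matrix (Fin n) (Fin n) ℝ) (b : Fin n → ℝ)
    (B : Matrix (Fin m) (Fin n) ℝ) (η : Fin m → ℝ)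
    (lam : ℝ) (hlam : 1 < lam) (v : Fin n → ℝ)
    (hv : A.mulVec v = lam • v) (hB : ∀ j : Fin m, 0 < B.mulVec v j) :
    ∃ x : Fin n → ℝ, ∀ k : ℕ, ∀ j : Fin m,
      η j < B.mulVec ((fun y => A.mulVec y + b)^[k] x) j := by
  obtain ⟨p, b₁, N, hp, hb₁⟩ :=
    exists_apply_add_eq_add_and_pow_sub_one_apply_eq_zero A.mulVecLin b
  have htrap : ∀ j, ∀ᶠ c in atTop, ∀ k,
      η j < B.mulVec ((fun y => A.mulVecLin y + b)^[k] p) j + c * (lam ^ k * B.mulVec v j) :=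
    fun j => eventually_forall_lt_add_mul_pow hlam.le (hB j) <|
      isBigO_iterate_affine hp hb₁ ((LinearMap.proj j).comp B.mulVecLin).toAddMonoidHom hlam
  obtain ⟨c, hc⟩ := (eventually_all.2 htrap).exists
  refine ⟨p + c • v, fun k j => ?_⟩
  change η j < B.mulVec ((fun y => A.mulVecLin y + b)^[k] (p + c • v)) j
  rw [iterate_affine_add, map_smul, pow_apply_of_apply_eq_smul hv]
  simpa only [Matrix.mulVec_add, Matrix.mulVec_smul, Pi.add_apply, Pi.smul_apply, smul_eq_mul]
    using hc j k

/-- If `A` has a real eigenvalue `λ > 1` with an eigenvector `v` satisfying `B v ⊳ 0`,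
then the affine instance `(A, b, B, η)` is trapped. -/
theorem affine_trapped_of_expanding_eigenvector
    (n m : ℕ) (A : Matrix (Fin n) (Fin n) ℝ) (b : Fin n → ℝ)
    (B : Matrix (Fin m) (Fin n) ℝ) (η : Fin m → ℝ)
    (lam : ℝ) (hlam : 1 < lam) (v : Fin n → ℝ) (hv0 : v ≠ 0)
    (hv : A.mulVec v = lam • v) (hB : ∀ j : Fin m, 0 < B.mulVec v j) :
    ∃ x : Fin n → ℝ, ∀ k : ℕ, ∀ j : Fin m,
      η j < B.mulVec ((fun y => A.mulVec y + b)^[k] x) j :=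
  affine_trapped_of_expanding_eigenvector_general n m A b B η lam hlam v hv hB
end
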